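/- Under assumptions (B), 𝔼[ M_∞^{β+δ} ] < ∞, where M_∞ = max( M_B, B(1) M_Ψ / 2 ) with M_Ψ independent of the squared Bessel process B. -/

import Mathlib

open MeasureTheory ProbabilityTheory Filter Set Asymptotics
open scoped ENNReal NNReal Classical

noncomputable section

variable {Ω : Type*} [MeasurableSpace Ω]

/-- pmf of the sum of `r` i.i.d. `Geo(p)` variables (`P[G = m] = p (1-p)^m`):
negative binomial distribution. -/
def negBinom (p : ℝ) (r m : ℕ) : ℝ :=
  (Nat.choose (m + r - 1) m : ℝ) * p ^ r * (1 - p) ^ m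

/-- Renewal sums `S_n = ξ_1 + ⋯ + ξ_n`. -/
def Sb (xi : ℤ → Ω → ℕ) (n : ℕ) (ω : Ω) : ℕ := ∑ j ∈ Finset.range n, xi (j + 1) ω

/-- `ρ_k = (1 - λ_k)/λ_k`. -/
def rhoF (lam : ℤ → Ω → ℝ) (k : ℤ) (ω : Ω) : ℝ := (1 - lam k ω) / lam k ω

/-- The sparse environment: `ω_k = λ_n` if `k = S_n` for some `n ≥ 1`, and `1/2` otherwise. -/
def envB (xi : ℤ → Ω → ℕ) (lam : ℤ → Ω → ℝ) (k : ℕ) (ω : Ω) : ℝ :=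
  if h : ∃ n : ℕ, 1 ≤ n ∧ Sb xi n ω = k then lam (h.choose : ℤ) ω else 1 / 2

/-- `Π_{m,k} = ∏_{j=m}^k ρ_j` (equal to `1` if `k < m`). -/
def Pib (lam : ℤ → Ω → ℝ) (m k : ℕ) (ω : Ω) : ℝ := ∏ j ∈ Finset.Icc m k, rhoF lam (j : ℤ) ω

/-- σ-algebra generated by the environment. -/
def envSigma (xi : ℤ → Ω → ℕ) (lam : ℤ → Ω → ℝ) : MeasurableSpace Ω :=
  ⨆ k : ℤ, MeasurableSpace.comap (fun ω => (xi k ω, lam k ω)) inferInstance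

/-- The environment `((ξ_k, λ_k))_{k ∈ ℤ}` is an i.i.d. sequence with values in
`ℕ₊ × (0,1)`. -/
structure IsSparseEnv (Pr : Measure Ω) (xi : ℤ → Ω → ℕ) (lam : ℤ → Ω → ℝ) : Prop where
  meas_xi : ∀ k, Measurable (xi k)
  meas_lam : ∀ k, Measurable (lam k)
  xi_pos : ∀ k ω, 1 ≤ xi k ω
  lam_mem : ∀ k ω, lam k ω ∈ Set.Ioo (0 : ℝ) 1
  indep : iIndepFun (fun k ω => (xi k ω, lam k ω)) Pr
  ident : ∀ k, IdentDistrib (fun ω => (xi k ω, lam k ω)) (fun ω => (xi 1 ω, lam 1 ω)) Pr Pr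

/-- Index of the block containing generation `k`, i.e. the `n` with `S_n ≤ k < S_{n+1}`. -/
def blockIdx (xi : ℤ → Ω → ℕ) (k : ℕ) (ω : Ω) : ℕ := sInf {n : ℕ | k < Sb xi (n + 1) ω}

/-- The potential `Ψ_{m,k} = Π_{m,n}` for `k ∈ [S_n, S_{n+1})`. -/
def PsiB (xi : ℤ → Ω → ℕ) (lam : ℤ → Ω → ℝ) (m k : ℕ) (ω : Ω) : ℝ :=
  Pib lam m (blockIdx xi k ω) ω

/-- σ-algebra generated by a real-indexed process. -/
def bmSig {Ω₂ : Type*} [MeasurableSpace Ω₂] (W : ℝ → Ω₂ → ℝ) : MeasurableSpace Ω₂ :=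
  ⨆ t : ℝ, MeasurableSpace.comap (W t) inferInstance

/-- `W` is a standard one-dimensional Brownian motion under `P`. -/
structure IsStdBM {Ω₂ : Type*} [MeasurableSpace Ω₂] (P : Measure Ω₂)
    (W : ℝ → Ω₂ → ℝ) : Prop where
  meas : ∀ t, Measurable (W t)
  init : ∀ᵐ ω ∂P, W 0 ω = 0
  incr : ∀ s t : ℝ, 0 ≤ s → s ≤ t →
    P.map (fun ω => W t ω - W s ω) = gaussianReal 0 (Real.toNNReal (t - s))
  indep_incr : ∀ t : ℕ → ℝ, StrictMono t → 0 ≤ t 0 →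
    iIndepFun (fun i ω => W (t (i + 1)) ω - W (t i) ω) P
  cont : ∀ᵐ ω ∂P, Continuous fun s => W s ω

/-- `M_B`: supremum over `[0,1]` of the squared Bessel process `‖(W₁(t), W₂(t))‖²`. -/
def besselMax {Ω₂ : Type*} (W₁ W₂ : ℝ → Ω₂ → ℝ) (ω : Ω₂) : ℝ :=
  ⨆ t : Set.Icc (0 : ℝ) 1, (W₁ t ω ^ 2 + W₂ t ω ^ 2)

/-- `B(1) = ‖(W₁(1), W₂(1))‖²`. -/
def besselOne {Ω₂ : Type*} (W₁ W₂ : ℝ → Ω₂ → ℝ) (ω : Ω₂) : ℝ :=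
  W₁ 1 ω ^ 2 + W₂ 1 ω ^ 2

/-- `M_∞ = max(M_B, B(1) M_Ψ / 2)`. -/
def Minfty {Ω₂ : Type*} (W₁ W₂ : ℝ → Ω₂ → ℝ) (Mψ : Ω₂ → ℝ) (ω : Ω₂) : ℝ :=
  max (besselMax W₁ W₂ ω) (besselOne W₁ W₂ ω * Mψ ω / 2)

/-- `M_{Ψ,1} = max_{k ≥ S₁ - 1} (Ψ_{1,k} + Ψ_{1,k+1})`. -/
def MPsiOne (xi : ℤ → Ω → ℕ) (lam : ℤ → Ω → ℝ) (ω : Ω) : ℝ :=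
  (⨆ (k : ℕ) (_ : Sb xi 1 ω - 1 ≤ k),
    ENNReal.ofReal (PsiB xi lam 1 k ω + PsiB xi lam 1 (k + 1) ω)).toReal

/-- A probability space carrying a two-dimensional standard Brownian motion `(W₁, W₂)`
together with a random variable `Mψ`, independent of the Brownian motion and distributed as
`M_Ψ = M_{Ψ,1}`. -/
structure MinfSetup (Pr : Measure Ω) (xi : ℤ → Ω → ℕ) (lam : ℤ → Ω → ℝ) where
  Ω₂ : Type
  m₂ : MeasurableSpace Ω₂
  P₂ : @Measure Ω₂ m₂
  W₁ : ℝ → Ω₂ → ℝ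
  W₂ : ℝ → Ω₂ → ℝ
  Mψ : Ω₂ → ℝ
  prob : IsProbabilityMeasure P₂
  bm₁ : @IsStdBM Ω₂ m₂ P₂ W₁
  bm₂ : @IsStdBM Ω₂ m₂ P₂ W₂
  indepW : Indep (@bmSig Ω₂ m₂ W₁) (@bmSig Ω₂ m₂ W₂) P₂
  indepM : Indep (@MeasurableSpace.comap Ω₂ ℝ Mψ inferInstance)
    (@bmSig Ω₂ m₂ W₁ ⊔ @bmSig Ω₂ m₂ W₂) P₂
  law : @Measure.map Ω₂ ℝ m₂ inferInstance Mψ P₂ = Pr.map (MPsiOne xi lam)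

attribute [instance] MinfSetup.m₂

/-!
Since `max a (b c / 2) ≤ max a (b |c|)`, we have `M_∞^p ≤ M_B^p + B(1)^p |M_Ψ|^p` for
`p = β + δ`, and by independence the last term has expectation `E[B(1)^p] E[|M_Ψ|^p]`.

Brownian side: for a continuous path with `W 0 = 0`, chaining along dyadic points gives
`sup_{[0,1]} |W| ≤ ∑ₘ maxₖ |W((k+1)/2^m) - W(k/2^m)|`. The `m`-th term has fourth moment at
most `2^m · 4^{-m} E[N⁴]` (`N` standard Gaussian), so by Minkowski the chain sum is in `L⁴`.
Hence `M_B` and `B(1)`, bounded by the square of the sum of the two chain sums, are in `L²`,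
so in `L^p` for `p ≤ 2`.

Environment side: `M_Ψ ≤ 2 supₙ Π_{1,n}`, so `M_Ψ^p ≤ 2^p ∑ₙ Π_{1,n}^p`. By independence this
has expectation `2^p ∑ₙ (E ρ^p)^n`, which is finite because `E ρ^p < 1`.
-/

open Topology

section Dyadic

lemma tendsto_floor_mul_two_pow_div {t : ℝ} (ht : 0 ≤ t) :
    Tendsto (fun M : ℕ => (⌊t * 2 ^ M⌋₊ : ℝ) / 2 ^ M) atTop (𝓝 t) :=
  (tendsto_nat_floor_mul_div_atTop ht).comp (tendsto_pow_atTop_atTop_of_one_lt one_lt_two)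

lemma floor_mul_two_pow_le {t : ℝ} (ht : t ≤ 1) (M : ℕ) : ⌊t * 2 ^ M⌋₊ ≤ 2 ^ M :=
  Nat.floor_le_of_le <| by push_cast; nlinarith [pow_pos (two_pos : (0 : ℝ) < 2) M]

lemma le_of_forall_dyadic_le {α : Type*} [TopologicalSpace α] [Preorder α] [ClosedIicTopology α]
    {f : ℝ → α} {t : ℝ} (ht : t ∈ Icc (0 : ℝ) 1) (hf : ContinuousAt f t) {c : α}
    (h : ∀ M k : ℕ, k ≤ 2 ^ M → f (k / 2 ^ M) ≤ c) : f t ≤ c :=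
  le_of_tendsto (hf.tendsto.comp (tendsto_floor_mul_two_pow_div ht.1))
    (Eventually.of_forall fun M => h M _ (floor_mul_two_pow_le ht.2 M))

lemma dyadic_mem_Icc {M k : ℕ} (hk : k ≤ 2 ^ M) : (k / 2 ^ M : ℝ) ∈ Icc (0 : ℝ) 1 :=
  ⟨by positivity, div_le_one_of_le₀ (by exact_mod_cast hk) (by positivity)⟩

lemma iSup_Icc_eq_iSup_dyadic {f : ℝ → ℝ} (hf : Continuous f) :
    ⨆ t : Icc (0 : ℝ) 1, f t = ⨆ q : {q : ℕ × ℕ // q.2 ≤ 2 ^ q.1}, f (q.1.2 / 2 ^ q.1.1) := by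
  have : Nonempty {q : ℕ × ℕ // q.2 ≤ 2 ^ q.1} := ⟨⟨(0, 0), Nat.zero_le _⟩⟩
  have hbdd : BddAbove (f '' Icc 0 1) := (isCompact_Icc.image hf).bddAbove
  refine le_antisymm (ciSup_le fun t => le_of_forall_dyadic_le t.2 hf.continuousAt
    fun M k hk => le_ciSup (f := fun q : {q : ℕ × ℕ // q.2 ≤ 2 ^ q.1} => f (q.1.2 / 2 ^ q.1.1))
      (hbdd.mono ?_) ⟨(M, k), hk⟩) (ciSup_le fun q => ?_)
  · rintro _ ⟨q, rfl⟩
    exact mem_image_of_mem f (dyadic_mem_Icc q.2)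
  · refine le_ciSup (f := fun t : Icc (0 : ℝ) 1 => f t) (hbdd.mono ?_) ⟨_, dyadic_mem_Icc q.2⟩
    rintro _ ⟨t, rfl⟩
    exact mem_image_of_mem f t.2

def dyadicOsc (f : ℝ → ℝ) (m : ℕ) : ℝ≥0∞ :=
  ⨆ (k : ℕ) (_ : k < 2 ^ m), ‖f ((k + 1 : ℕ) / 2 ^ m) - f (k / 2 ^ m)‖ₑ

def dyadicChain (f : ℝ → ℝ) : ℝ≥0∞ := ∑' m, dyadicOsc f m

lemma enorm_sub_le_dyadicOsc (f : ℝ → ℝ) {m k : ℕ} (hk : k < 2 ^ m) :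
    ‖f ((k + 1 : ℕ) / 2 ^ m) - f (k / 2 ^ m)‖ₑ ≤ dyadicOsc f m :=
  le_iSup₂ (f := fun k (_ : k < 2 ^ m) => ‖f ((k + 1 : ℕ) / 2 ^ m) - f (k / 2 ^ m)‖ₑ) k hk

lemma enorm_dyadic_le_sum_dyadicOsc {f : ℝ → ℝ} (h0 : f 0 = 0) (M : ℕ) {k : ℕ}
    (hk : k ≤ 2 ^ M) : ‖f (k / 2 ^ M)‖ₑ ≤ ∑ m ∈ Finset.range (M + 1), dyadicOsc f m := by
  induction M generalizing k with
  | zero =>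
    interval_cases k
    · simp [h0]
    · simpa [h0] using enorm_sub_le_dyadicOsc f (m := 0) (k := 0) one_pos
  | succ M ih =>
    have hhalf : ∀ j : ℕ, ((2 * j : ℕ) / 2 ^ (M + 1) : ℝ) = j / 2 ^ M := fun j => by
      push_cast; field_simp; ring
    rw [Finset.sum_range_succ]
    obtain ⟨j, rfl | rfl⟩ := Nat.even_or_odd' k
    · rw [hhalf]
      exact (ih (by omega)).trans le_self_add
    · have hx := ih (k := j) (by omega)
      rw [← hhalf] at hx
      set x := f ((2 * j : ℕ) / 2 ^ (M + 1))
      set y := f ((2 * j + 1 : ℕ) / 2 ^ (M + 1))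
      calc ‖y‖ₑ ≤ ‖x‖ₑ + ‖y - x‖ₑ := by simpa using enorm_add_le x (y - x)
        _ ≤ _ := add_le_add hx (enorm_sub_le_dyadicOsc f (by omega))

lemma enorm_le_dyadicChain {f : ℝ → ℝ} (hf : Continuous f) (h0 : f 0 = 0) {t : ℝ}
    (ht : t ∈ Icc (0 : ℝ) 1) : ‖f t‖ₑ ≤ dyadicChain f :=
  le_of_forall_dyadic_le (f := fun s => ‖f s‖ₑ) ht (by fun_prop) fun M _ hk =>
    (enorm_dyadic_le_sum_dyadicOsc h0 M hk).trans (ENNReal.sum_le_tsum _)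

lemma ofReal_sq_add_sq_le_dyadicChain {f₁ f₂ : ℝ → ℝ} (hf₁ : Continuous f₁)
    (hf₂ : Continuous f₂) (h₁ : f₁ 0 = 0) (h₂ : f₂ 0 = 0) {t : ℝ} (ht : t ∈ Icc (0 : ℝ) 1) :
    ENNReal.ofReal (f₁ t ^ 2 + f₂ t ^ 2) ≤ (dyadicChain f₁ + dyadicChain f₂) ^ (2 : ℝ) := by
  have hsq : ∀ x : ℝ, ENNReal.ofReal (x ^ 2) = ‖x‖ₑ ^ (2 : ℝ) := fun x => by
    rw [Real.enorm_eq_ofReal_abs, ENNReal.rpow_two, ← ENNReal.ofReal_pow (abs_nonneg x), sq_abs]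
  calc ENNReal.ofReal (f₁ t ^ 2 + f₂ t ^ 2)
      ≤ ‖f₁ t‖ₑ ^ (2 : ℝ) + ‖f₂ t‖ₑ ^ (2 : ℝ) := by
        rw [← hsq, ← hsq]; exact ENNReal.ofReal_add_le
    _ ≤ (‖f₁ t‖ₑ + ‖f₂ t‖ₑ) ^ (2 : ℝ) := ENNReal.add_rpow_le_rpow_add _ _ one_le_two
    _ ≤ _ := ENNReal.rpow_le_rpow (add_le_add (enorm_le_dyadicChain hf₁ h₁ ht)
        (enorm_le_dyadicChain hf₂ h₂ ht)) zero_le_two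

end Dyadic

section Moments

variable {α : Type*} [MeasurableSpace α] {μ : Measure α}

lemma ENNReal.iSup_rpow {ι : Sort*} (f : ι → ℝ≥0∞) {p : ℝ} (hp : 0 < p) :
    (⨆ i, f i) ^ p = ⨆ i, f i ^ p :=
  (ENNReal.orderIsoRpow p hp).map_iSup f

lemma ENNReal.iSup_rpow_le_tsum_rpow {ι : Type*} (f : ι → ℝ≥0∞) {p : ℝ} (hp : 0 < p) :
    (⨆ i, f i) ^ p ≤ ∑' i, f i ^ p := by
  rw [ENNReal.iSup_rpow f hp]
  exact iSup_le fun i => ENNReal.le_tsum (f := fun i => f i ^ p) i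

lemma lintegral_tsum_rpow_le {f : ℕ → α → ℝ≥0∞} (hf : ∀ n, AEMeasurable (f n) μ) {p : ℝ}
    (hp : 1 ≤ p) :
    ∫⁻ a, (∑' n, f n a) ^ p ∂μ ≤ (∑' n, (∫⁻ a, f n a ^ p ∂μ) ^ (1 / p)) ^ p := by
  have hp0 : 0 < p := by linarith
  have hpartial : ∀ N, ∫⁻ a, (∑ n ∈ Finset.range N, f n a) ^ p ∂μ ≤
      (∑' n, (∫⁻ a, f n a ^ p ∂μ) ^ (1 / p)) ^ p := by
    intro N
    have h := eLpNorm'_sum_le (s := Finset.range N) (fun n _ => (hf n).aestronglyMeasurable) hp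
    simp only [eLpNorm', enorm_eq_self, Finset.sum_apply] at h
    calc ∫⁻ a, (∑ n ∈ Finset.range N, f n a) ^ p ∂μ
        = ((∫⁻ a, (∑ n ∈ Finset.range N, f n a) ^ p ∂μ) ^ (1 / p)) ^ p := by
          rw [← ENNReal.rpow_mul, one_div_mul_cancel hp0.ne', ENNReal.rpow_one]
      _ ≤ (∑ n ∈ Finset.range N, (∫⁻ a, f n a ^ p ∂μ) ^ (1 / p)) ^ p :=
          ENNReal.rpow_le_rpow h hp0.le
      _ ≤ _ := ENNReal.rpow_le_rpow (ENNReal.sum_le_tsum _) hp0.le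
  calc ∫⁻ a, (∑' n, f n a) ^ p ∂μ = ∫⁻ a, ⨆ N, (∑ n ∈ Finset.range N, f n a) ^ p ∂μ := by
        simp_rw [ENNReal.tsum_eq_iSup_nat]
        exact lintegral_congr fun a => ENNReal.iSup_rpow _ hp0
    _ = ⨆ N, ∫⁻ a, (∑ n ∈ Finset.range N, f n a) ^ p ∂μ :=
        lintegral_iSup' (fun N => (Finset.aemeasurable_fun_sum _ fun n _ => hf n).pow_const p)
          (ae_of_all _ fun a N M hNM => ENNReal.rpow_le_rpow
            (Finset.sum_le_sum_of_subset (Finset.range_subset_range.2 hNM)) hp0.le)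
    _ ≤ _ := iSup_le hpartial

lemma lintegral_tsum_prod_Icc_lt_top {Y : ℕ → α → ℝ≥0∞} (hY : ∀ j, Measurable (Y j))
    (hind : iIndepFun Y μ) {r : ℝ≥0∞} (hr : ∀ j, ∫⁻ a, Y j a ∂μ = r) (hr1 : r < 1) :
    ∫⁻ a, ∑' n, ∏ j ∈ Finset.Icc 1 n, Y j a ∂μ < ⊤ := by
  rw [lintegral_tsum fun n => (Finset.measurable_prod _ fun j _ => hY j).aemeasurable]
  simp_rw [lintegral_prod_eq_prod_lintegral_of_indepFun _ Y hind hY, hr, Finset.prod_const,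
    Nat.card_Icc, add_tsub_cancel_right, ENNReal.tsum_geometric]
  exact ENNReal.inv_lt_top.2 (tsub_pos_of_lt hr1)

lemma rpow_le_one_add_rpow {x p q : ℝ} (hx : 0 ≤ x) (hp : 0 ≤ p) (hpq : p ≤ q) :
    x ^ p ≤ 1 + x ^ q := by
  rcases le_total x 1 with h | h
  · exact (Real.rpow_le_one hx h hp).trans (le_add_of_nonneg_right (Real.rpow_nonneg hx q))
  · exact (Real.rpow_le_rpow_of_exponent_le h hpq).trans (le_add_of_nonneg_left zero_le_one)

lemma integrable_rpow_of_ofReal_le_rpow_two [IsFiniteMeasure μ] {X : α → ℝ} {Y : α → ℝ≥0∞}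
    (hX : AEMeasurable X μ) (hX0 : ∀ a, 0 ≤ X a)
    (hXY : ∀ᵐ a ∂μ, ENNReal.ofReal (X a) ≤ Y a ^ (2 : ℝ)) (hY : ∫⁻ a, Y a ^ (4 : ℝ) ∂μ < ⊤)
    {p : ℝ} (hp0 : 0 ≤ p) (hp2 : p ≤ 2) : Integrable (fun a => X a ^ p) μ := by
  refine ⟨(hX.pow_const p).aestronglyMeasurable,
    (hasFiniteIntegral_iff_ofReal (ae_of_all _ fun a => Real.rpow_nonneg (hX0 a) p)).2 ?_⟩
  have hbound : ∀ᵐ a ∂μ, ENNReal.ofReal (X a ^ p) ≤ 1 + Y a ^ (4 : ℝ) := by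
    filter_upwards [hXY] with a ha
    calc ENNReal.ofReal (X a ^ p) ≤ ENNReal.ofReal (1 + X a ^ (2 : ℝ)) :=
          ENNReal.ofReal_le_ofReal (rpow_le_one_add_rpow (hX0 a) hp0 hp2)
      _ = 1 + ENNReal.ofReal (X a) ^ (2 : ℝ) := by
          rw [ENNReal.ofReal_add zero_le_one (Real.rpow_nonneg (hX0 a) _), ENNReal.ofReal_one,
            ENNReal.ofReal_rpow_of_nonneg (hX0 a) zero_le_two]
      _ ≤ 1 + (Y a ^ (2 : ℝ)) ^ (2 : ℝ) := by gcongr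
      _ = 1 + Y a ^ (4 : ℝ) := by rw [← ENNReal.rpow_mul]; norm_num
  calc ∫⁻ a, ENNReal.ofReal (X a ^ p) ∂μ ≤ ∫⁻ a, 1 + Y a ^ (4 : ℝ) ∂μ := lintegral_mono_ae hbound
    _ = μ univ + ∫⁻ a, Y a ^ (4 : ℝ) ∂μ := by rw [lintegral_add_left measurable_const]; simp
    _ < ⊤ := ENNReal.add_lt_top.2 ⟨measure_lt_top μ univ, hY⟩

lemma ofReal_ciSup_le {ι : Sort*} [Nonempty ι] {f : ι → ℝ} {c : ℝ≥0∞}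
    (h : ∀ i, ENNReal.ofReal (f i) ≤ c) : ENNReal.ofReal (⨆ i, f i) ≤ c := by
  rcases eq_or_ne c ⊤ with rfl | hc
  · exact le_top
  simp only [ENNReal.ofReal_le_iff_le_toReal hc] at h ⊢
  exact ciSup_le h

end Moments

section Gaussian

lemma lintegral_enorm_rpow_four_gaussianReal_lt_top :
    ∫⁻ x, ‖x‖ₑ ^ (4 : ℝ) ∂gaussianReal 0 1 < ⊤ := by
  simpa using lintegral_rpow_enorm_lt_top_of_eLpNorm_lt_top (by norm_num) (by norm_num)
    (memLp_id_gaussianReal (μ := 0) (v := 1) 4).eLpNorm_lt_top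

lemma lintegral_enorm_rpow_four_gaussianReal (v : ℝ≥0) :
    ∫⁻ x, ‖x‖ₑ ^ (4 : ℝ) ∂gaussianReal 0 v =
      (v : ℝ≥0∞) ^ 2 * ∫⁻ x, ‖x‖ₑ ^ (4 : ℝ) ∂gaussianReal 0 1 := by
  have hmap := gaussianReal_map_const_mul (μ := 0) (v := 1) (NNReal.sqrt v)
  rw [mul_zero, show NNReal.mk ((NNReal.sqrt v : ℝ) ^ 2) (sq_nonneg _) * 1 = v by ext; simp]
    at hmap
  rw [← hmap, lintegral_map (by fun_prop) (by fun_prop), ← lintegral_const_mul' _ _ (by simp)]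
  refine lintegral_congr fun x => ?_
  rw [enorm_mul, ENNReal.mul_rpow_of_nonneg _ _ (by norm_num),
    Real.enorm_of_nonneg (by positivity)]
  congr 1
  rw [ENNReal.ofReal_coe_nnreal, show (4 : ℝ) = (2 : ℕ) * (2 : ℕ) by norm_num, ENNReal.rpow_mul,
    ENNReal.rpow_natCast, ENNReal.rpow_natCast, ← ENNReal.coe_pow, NNReal.sq_sqrt]

end Gaussian

section Brownian

lemma besselMax_nonneg {Ω₂ : Type*} (W₁ W₂ : ℝ → Ω₂ → ℝ) (ω : Ω₂) : 0 ≤ besselMax W₁ W₂ ω :=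
  Real.iSup_nonneg fun _ => by positivity

lemma besselOne_nonneg {Ω₂ : Type*} (W₁ W₂ : ℝ → Ω₂ → ℝ) (ω : Ω₂) : 0 ≤ besselOne W₁ W₂ ω :=
  add_nonneg (sq_nonneg _) (sq_nonneg _)

lemma max_mul_div_two_rpow_le {a b c p : ℝ} (ha : 0 ≤ a) (hb : 0 ≤ b) (hp : 0 ≤ p) :
    max a (b * c / 2) ^ p ≤ a ^ p + b ^ p * |c| ^ p := by
  have hbc : b * c / 2 ≤ b * |c| := by nlinarith [le_abs_self c, abs_nonneg c]
  rw [← Real.mul_rpow hb (abs_nonneg c)]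
  refine (Real.rpow_le_rpow (le_max_of_le_left ha) (max_le_max le_rfl hbc) hp).trans ?_
  rcases le_total a (b * |c|) with h | h
  · rw [max_eq_right h]
    exact le_add_of_nonneg_left (Real.rpow_nonneg ha p)
  · rw [max_eq_left h]
    exact le_add_of_nonneg_right (Real.rpow_nonneg (by positivity) p)

lemma norm_Minfty_rpow_le {Ω₂ : Type*} (W₁ W₂ : ℝ → Ω₂ → ℝ) (Mψ : Ω₂ → ℝ) {p : ℝ}
    (hp : 0 ≤ p) (ω : Ω₂) : ‖Minfty W₁ W₂ Mψ ω ^ p‖ ≤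
      besselMax W₁ W₂ ω ^ p + besselOne W₁ W₂ ω ^ p * |Mψ ω| ^ p := by
  have hM : 0 ≤ Minfty W₁ W₂ Mψ ω := le_max_of_le_left (besselMax_nonneg _ _ ω)
  rw [Real.norm_of_nonneg (Real.rpow_nonneg hM _)]
  exact max_mul_div_two_rpow_le (besselMax_nonneg _ _ ω) (besselOne_nonneg _ _ ω) hp

variable {Ω₂ : Type*} [MeasurableSpace Ω₂] {P : Measure Ω₂} {W W₁ W₂ : ℝ → Ω₂ → ℝ}

lemma measurable_dyadicOsc (hW : ∀ t, Measurable (W t)) (m : ℕ) :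
    Measurable fun ω => dyadicOsc (W · ω) m :=
  Measurable.iSup fun _ => Measurable.iSup fun _ => ((hW _).sub (hW _)).enorm

lemma measurable_dyadicChain (hW : ∀ t, Measurable (W t)) :
    Measurable fun ω => dyadicChain (W · ω) :=
  Measurable.tsum (measurable_dyadicOsc hW)

lemma measurable_besselOne (h₁ : ∀ t, Measurable (W₁ t)) (h₂ : ∀ t, Measurable (W₂ t)) :
    Measurable (besselOne W₁ W₂) :=
  ((h₁ 1).pow_const 2).add ((h₂ 1).pow_const 2)

lemma IsStdBM.lintegral_enorm_sub_rpow_four (hW : IsStdBM P W) {s t : ℝ} (hs : 0 ≤ s)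
    (hst : s ≤ t) :
    ∫⁻ ω, ‖W t ω - W s ω‖ₑ ^ (4 : ℝ) ∂P =
      ENNReal.ofReal (t - s) ^ 2 * ∫⁻ x, ‖x‖ₑ ^ (4 : ℝ) ∂gaussianReal 0 1 := by
  rw [← lintegral_map (f := fun x : ℝ => ‖x‖ₑ ^ (4 : ℝ)) (g := fun ω => W t ω - W s ω)
    (by fun_prop) ((hW.meas t).sub (hW.meas s)), hW.incr s t hs hst,
    lintegral_enorm_rpow_four_gaussianReal]
  rfl

lemma dyadicOsc_rpow_four_le (f : ℝ → ℝ) (m : ℕ) :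
    dyadicOsc f m ^ (4 : ℝ) ≤
      ∑ k ∈ Finset.range (2 ^ m), ‖f ((k + 1 : ℕ) / 2 ^ m) - f (k / 2 ^ m)‖ₑ ^ (4 : ℝ) := by
  simp only [dyadicOsc, ENNReal.iSup_rpow _ (show (0 : ℝ) < 4 by norm_num)]
  exact iSup₂_le fun k hk => Finset.single_le_sum
    (f := fun k : ℕ => ‖f ((k + 1 : ℕ) / 2 ^ m) - f (k / 2 ^ m)‖ₑ ^ (4 : ℝ))
    (fun _ _ => zero_le) (Finset.mem_range.2 hk)

lemma IsStdBM.lintegral_dyadicOsc_rpow_four_le (hW : IsStdBM P W) (m : ℕ) :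
    ∫⁻ ω, dyadicOsc (W · ω) m ^ (4 : ℝ) ∂P ≤
      2⁻¹ ^ m * ∫⁻ x, ‖x‖ₑ ^ (4 : ℝ) ∂gaussianReal 0 1 := by
  set K := ∫⁻ x, ‖x‖ₑ ^ (4 : ℝ) ∂gaussianReal 0 1
  have hinc : ∀ k : ℕ, ∫⁻ ω, ‖W ((k + 1 : ℕ) / 2 ^ m) ω - W (k / 2 ^ m) ω‖ₑ ^ (4 : ℝ) ∂P =
      2⁻¹ ^ m * 2⁻¹ ^ m * K := fun k => by
    rw [hW.lintegral_enorm_sub_rpow_four (by positivity) (by gcongr; simp),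
      show ((k + 1 : ℕ) / 2 ^ m - k / 2 ^ m : ℝ) = 2⁻¹ ^ m by
        rw [← sub_div, Nat.cast_succ, add_sub_cancel_left, one_div, inv_pow],
      ENNReal.ofReal_pow (by norm_num), ENNReal.ofReal_inv_of_pos two_pos, ENNReal.ofReal_ofNat,
      sq]
  have hmeas := hW.meas
  calc ∫⁻ ω, dyadicOsc (W · ω) m ^ (4 : ℝ) ∂P
      ≤ ∫⁻ ω, ∑ k ∈ Finset.range (2 ^ m),
          ‖W ((k + 1 : ℕ) / 2 ^ m) ω - W (k / 2 ^ m) ω‖ₑ ^ (4 : ℝ) ∂P :=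
        lintegral_mono fun ω => dyadicOsc_rpow_four_le (W · ω) m
    _ = 2 ^ m * (2⁻¹ ^ m * 2⁻¹ ^ m * K) := by
        rw [lintegral_finsetSum _ fun k _ => by fun_prop, Finset.sum_congr rfl fun k _ => hinc k]
        simp
    _ = 2⁻¹ ^ m * K := by
        rw [← mul_assoc, ← mul_assoc, ← mul_pow,
          ENNReal.mul_inv_cancel two_ne_zero ENNReal.ofNat_ne_top, one_pow, one_mul]

lemma IsStdBM.lintegral_dyadicChain_rpow_four_lt_top (hW : IsStdBM P W) :
    ∫⁻ ω, dyadicChain (W · ω) ^ (4 : ℝ) ∂P < ⊤ := by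
  set K := ∫⁻ x, ‖x‖ₑ ^ (4 : ℝ) ∂gaussianReal 0 1
  have hq : (2⁻¹ ^ (1 / 4 : ℝ) : ℝ≥0∞) < 1 := ENNReal.rpow_lt_one (by norm_num) (by norm_num)
  have hterm : ∀ m : ℕ, (∫⁻ ω, dyadicOsc (W · ω) m ^ (4 : ℝ) ∂P) ^ (1 / 4 : ℝ) ≤
      (2⁻¹ ^ (1 / 4 : ℝ)) ^ m * K ^ (1 / 4 : ℝ) := fun m => by
    calc (∫⁻ ω, dyadicOsc (W · ω) m ^ (4 : ℝ) ∂P) ^ (1 / 4 : ℝ)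
        ≤ (2⁻¹ ^ m * K) ^ (1 / 4 : ℝ) :=
          ENNReal.rpow_le_rpow (hW.lintegral_dyadicOsc_rpow_four_le m) (by norm_num)
      _ = (2⁻¹ ^ (1 / 4 : ℝ)) ^ m * K ^ (1 / 4 : ℝ) := by
          rw [ENNReal.mul_rpow_of_nonneg _ _ (by norm_num), ← ENNReal.rpow_natCast (2⁻¹ ^ _),
            ← ENNReal.rpow_natCast 2⁻¹, ← ENNReal.rpow_mul, ← ENNReal.rpow_mul,
            mul_comm (m : ℝ)]
  calc ∫⁻ ω, dyadicChain (W · ω) ^ (4 : ℝ) ∂P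
      ≤ (∑' m, (∫⁻ ω, dyadicOsc (W · ω) m ^ (4 : ℝ) ∂P) ^ (1 / 4 : ℝ)) ^ (4 : ℝ) :=
        lintegral_tsum_rpow_le (fun m => (measurable_dyadicOsc hW.meas m).aemeasurable)
          (by norm_num)
    _ ≤ (∑' m : ℕ, (2⁻¹ ^ (1 / 4 : ℝ)) ^ m * K ^ (1 / 4 : ℝ)) ^ (4 : ℝ) :=
        ENNReal.rpow_le_rpow (ENNReal.tsum_le_tsum hterm) (by norm_num)
    _ < ⊤ := by
        rw [ENNReal.tsum_mul_right, ENNReal.tsum_geometric]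
        exact ENNReal.rpow_lt_top_of_nonneg (by norm_num) (ENNReal.mul_ne_top
          (ENNReal.inv_ne_top.2 (tsub_pos_of_lt hq).ne')
          (ENNReal.rpow_ne_top_of_nonneg (by norm_num)
            lintegral_enorm_rpow_four_gaussianReal_lt_top.ne))

lemma IsStdBM.lintegral_dyadicChain_add_rpow_four_lt_top (h₁ : IsStdBM P W₁)
    (h₂ : IsStdBM P W₂) :
    ∫⁻ ω, (dyadicChain (W₁ · ω) + dyadicChain (W₂ · ω)) ^ (4 : ℝ) ∂P < ⊤ := by
  calc ∫⁻ ω, (dyadicChain (W₁ · ω) + dyadicChain (W₂ · ω)) ^ (4 : ℝ) ∂P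
      ≤ ∫⁻ ω, 2 ^ (4 - 1 : ℝ) *
          (dyadicChain (W₁ · ω) ^ (4 : ℝ) + dyadicChain (W₂ · ω) ^ (4 : ℝ)) ∂P :=
        lintegral_mono fun ω => ENNReal.rpow_add_le_mul_rpow_add_rpow _ _ (by norm_num)
    _ = 2 ^ (4 - 1 : ℝ) * (∫⁻ ω, dyadicChain (W₁ · ω) ^ (4 : ℝ) ∂P
          + ∫⁻ ω, dyadicChain (W₂ · ω) ^ (4 : ℝ) ∂P) := by
        rw [lintegral_const_mul' _ _ (by simp),
          lintegral_add_left ((measurable_dyadicChain h₁.meas).pow_const _)]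
    _ < ⊤ := ENNReal.mul_lt_top (ENNReal.rpow_lt_top_of_nonneg (by norm_num) (by simp))
        (ENNReal.add_lt_top.2 ⟨h₁.lintegral_dyadicChain_rpow_four_lt_top,
          h₂.lintegral_dyadicChain_rpow_four_lt_top⟩)

lemma IsStdBM.ae_ofReal_sq_add_sq_le (h₁ : IsStdBM P W₁) (h₂ : IsStdBM P W₂) :
    ∀ᵐ ω ∂P, ∀ t ∈ Icc (0 : ℝ) 1, ENNReal.ofReal (W₁ t ω ^ 2 + W₂ t ω ^ 2) ≤
      (dyadicChain (W₁ · ω) + dyadicChain (W₂ · ω)) ^ (2 : ℝ) := by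
  filter_upwards [h₁.init, h₂.init, h₁.cont, h₂.cont] with ω i₁ i₂ c₁ c₂ t ht
    using ofReal_sq_add_sq_le_dyadicChain c₁ c₂ i₁ i₂ ht

lemma IsStdBM.aemeasurable_besselMax (h₁ : IsStdBM P W₁) (h₂ : IsStdBM P W₂) :
    AEMeasurable (besselMax W₁ W₂) P := by
  refine (Measurable.iSup (f := fun (q : {q : ℕ × ℕ // q.2 ≤ 2 ^ q.1}) ω =>
      W₁ (q.1.2 / 2 ^ q.1.1) ω ^ 2 + W₂ (q.1.2 / 2 ^ q.1.1) ω ^ 2) fun q =>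
    ((h₁.meas _).pow_const 2).add ((h₂.meas _).pow_const 2)).aemeasurable.congr ?_
  filter_upwards [h₁.cont, h₂.cont] with ω c₁ c₂
  exact (iSup_Icc_eq_iSup_dyadic (f := fun t => W₁ t ω ^ 2 + W₂ t ω ^ 2) (by fun_prop)).symm

lemma IsStdBM.integrable_besselMax_rpow [IsFiniteMeasure P] (h₁ : IsStdBM P W₁)
    (h₂ : IsStdBM P W₂) {p : ℝ} (hp0 : 0 ≤ p) (hp2 : p ≤ 2) :
    Integrable (fun ω => besselMax W₁ W₂ ω ^ p) P := by
  refine integrable_rpow_of_ofReal_le_rpow_two (h₁.aemeasurable_besselMax h₂)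
    (besselMax_nonneg W₁ W₂) ?_ (h₁.lintegral_dyadicChain_add_rpow_four_lt_top h₂) hp0 hp2
  filter_upwards [h₁.ae_ofReal_sq_add_sq_le h₂] with ω h using ofReal_ciSup_le fun t => h t t.2

lemma IsStdBM.integrable_besselOne_rpow [IsFiniteMeasure P] (h₁ : IsStdBM P W₁)
    (h₂ : IsStdBM P W₂) {p : ℝ} (hp0 : 0 ≤ p) (hp2 : p ≤ 2) :
    Integrable (fun ω => besselOne W₁ W₂ ω ^ p) P := by
  refine integrable_rpow_of_ofReal_le_rpow_two
    (measurable_besselOne h₁.meas h₂.meas).aemeasurable (besselOne_nonneg W₁ W₂) ?_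
    (h₁.lintegral_dyadicChain_add_rpow_four_lt_top h₂) hp0 hp2
  filter_upwards [h₁.ae_ofReal_sq_add_sq_le h₂] with ω h using h 1 (right_mem_Icc.2 zero_le_one)

end Brownian

section Environment

variable {Pr : Measure Ω} {xi : ℤ → Ω → ℕ} {lam : ℤ → Ω → ℝ}

lemma measurable_rhoF (hlam : ∀ k, Measurable (lam k)) (k : ℤ) : Measurable (rhoF lam k) :=
  (measurable_const.sub (hlam k)).div (hlam k)

lemma rhoF_nonneg {α : Type*} {lam : ℤ → α → ℝ} (hlam : ∀ k a, lam k a ∈ Ioo (0 : ℝ) 1)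
    (k : ℤ) (a : α) : 0 ≤ rhoF lam k a :=
  div_nonneg (sub_nonneg.2 (hlam k a).2.le) (hlam k a).1.le

lemma MPsiOne_nonneg {α : Type*} (xi : ℤ → α → ℕ) (lam : ℤ → α → ℝ) (a : α) :
    0 ≤ MPsiOne xi lam a :=
  ENNReal.toReal_nonneg

lemma le_Sb {α : Type*} {xi : ℤ → α → ℕ} (hpos : ∀ k a, 1 ≤ xi k a) (n : ℕ) (a : α) :
    n ≤ Sb xi n a := by
  simpa [Sb] using Finset.sum_le_sum fun j (_ : j ∈ Finset.range n) => hpos (j + 1) a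

lemma measurable_Sb (hxi : ∀ k, Measurable (xi k)) (n : ℕ) : Measurable (Sb xi n) :=
  Finset.measurable_sum _ fun _ _ => hxi _

lemma measurable_blockIdx (hxi : ∀ k, Measurable (xi k)) (hpos : ∀ k ω, 1 ≤ xi k ω) (k : ℕ) :
    Measurable (blockIdx xi k) := by
  have hne : ∀ ω, {n : ℕ | k < Sb xi (n + 1) ω}.Nonempty := fun ω =>
    ⟨k, le_Sb hpos (k + 1) ω⟩
  have : blockIdx xi k = fun ω => Nat.find (hne ω) := funext fun ω => by
    rw [blockIdx, Nat.sInf_def (hne ω)]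
    congr
  rw [this]
  exact measurable_find hne fun n => measurableSet_lt measurable_const (measurable_Sb hxi _)

lemma measurable_MPsiOne (hxi : ∀ k, Measurable (xi k)) (hpos : ∀ k ω, 1 ≤ xi k ω)
    (hlam : ∀ k, Measurable (lam k)) : Measurable (MPsiOne xi lam) := by
  have hPib : ∀ n, Measurable (Pib lam 1 n) := fun n =>
    Finset.measurable_prod _ fun j _ => measurable_rhoF hlam j
  have hPsi : ∀ k, Measurable (fun ω => PsiB xi lam 1 k ω) := fun k =>
    (measurable_from_prod_countable_left (f := fun q : Ω × ℕ => Pib lam 1 q.2 q.1)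
      fun n => hPib n).comp (measurable_id.prodMk (measurable_blockIdx hxi hpos k))
  refine (Measurable.iSup fun k => ?_).ennreal_toReal
  simp_rw [iSup_eq_if]
  exact Measurable.ite (measurableSet_le ((measurable_Sb hxi 1).sub measurable_const)
    measurable_const) ((hPsi k).add (hPsi (k + 1))).ennreal_ofReal measurable_const

lemma ofReal_MPsiOne_rpow_le {α : Type*} {xi : ℤ → α → ℕ} {lam : ℤ → α → ℝ}
    (hlam : ∀ k a, lam k a ∈ Ioo (0 : ℝ) 1) {p : ℝ} (hp : 0 < p) (a : α) :
    ENNReal.ofReal (MPsiOne xi lam a ^ p) ≤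
      2 ^ p * ∑' n : ℕ, ∏ j ∈ Finset.Icc 1 n, ENNReal.ofReal (rhoF lam j a) ^ p := by
  have hsup : ⨆ (k : ℕ) (_ : Sb xi 1 a - 1 ≤ k),
      ENNReal.ofReal (PsiB xi lam 1 k a + PsiB xi lam 1 (k + 1) a) ≤
      2 * ⨆ n, ENNReal.ofReal (Pib lam 1 n a) := by
    refine iSup₂_le fun k _ => ?_
    calc ENNReal.ofReal (PsiB xi lam 1 k a + PsiB xi lam 1 (k + 1) a)
        ≤ ENNReal.ofReal (Pib lam 1 (blockIdx xi k a) a)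
          + ENNReal.ofReal (Pib lam 1 (blockIdx xi (k + 1) a) a) := ENNReal.ofReal_add_le
      _ ≤ (⨆ n, ENNReal.ofReal (Pib lam 1 n a)) + ⨆ n, ENNReal.ofReal (Pib lam 1 n a) :=
        add_le_add (le_iSup (fun n => ENNReal.ofReal (Pib lam 1 n a)) _)
          (le_iSup (fun n => ENNReal.ofReal (Pib lam 1 n a)) _)
      _ = _ := (two_mul _).symm
  have hprod : ∀ n, ENNReal.ofReal (Pib lam 1 n a) ^ p =
      ∏ j ∈ Finset.Icc 1 n, ENNReal.ofReal (rhoF lam j a) ^ p := fun n => by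
    rw [ENNReal.prod_rpow_of_nonneg hp.le, Pib,
      ENNReal.ofReal_prod_of_nonneg fun (j : ℕ) _ => rhoF_nonneg hlam j a]
  calc ENNReal.ofReal (MPsiOne xi lam a ^ p)
      = ENNReal.ofReal (MPsiOne xi lam a) ^ p :=
        (ENNReal.ofReal_rpow_of_nonneg (MPsiOne_nonneg xi lam a) hp.le).symm
    _ ≤ (2 * ⨆ n, ENNReal.ofReal (Pib lam 1 n a)) ^ p :=
        ENNReal.rpow_le_rpow (ENNReal.ofReal_toReal_le.trans hsup) hp.le
    _ = 2 ^ p * (⨆ n, ENNReal.ofReal (Pib lam 1 n a)) ^ p :=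
        ENNReal.mul_rpow_of_nonneg _ _ hp.le
    _ ≤ _ := by
        rw [← funext hprod]
        exact mul_le_mul_right (ENNReal.iSup_rpow_le_tsum_rpow _ hp) _

lemma IsSparseEnv.integrable_MPsiOne_rpow (hEnv : IsSparseEnv Pr xi lam)
    {p : ℝ} (hp : 0 < p) (hmomρ : Integrable (fun ω => rhoF lam 1 ω ^ p) Pr)
    (hmomρ1 : ∫ ω, rhoF lam 1 ω ^ p ∂Pr < 1) :
    Integrable (fun ω => MPsiOne xi lam ω ^ p) Pr := by
  set g : ℕ × ℝ → ℝ≥0∞ := fun q => ENNReal.ofReal ((1 - q.2) / q.2) ^ p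
  have hg : Measurable g := by fun_prop
  have hY : ∀ j : ℕ, Measurable fun ω => ENNReal.ofReal (rhoF lam j ω) ^ p := fun j =>
    (measurable_rhoF hEnv.meas_lam j).ennreal_ofReal.pow_const p
  have hind : iIndepFun (fun (j : ℕ) ω => ENNReal.ofReal (rhoF lam j ω) ^ p) Pr :=
    (hEnv.indep.comp (fun _ => g) fun _ => hg).precomp Nat.cast_injective
  have hr : ∀ j : ℕ, ∫⁻ ω, ENNReal.ofReal (rhoF lam j ω) ^ p ∂Pr =
      ENNReal.ofReal (∫ ω, rhoF lam 1 ω ^ p ∂Pr) := fun j => by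
    refine ((hEnv.ident j).comp hg).lintegral_eq.trans ?_
    rw [ofReal_integral_eq_lintegral_ofReal hmomρ
      (ae_of_all _ fun ω => Real.rpow_nonneg (rhoF_nonneg hEnv.lam_mem 1 ω) p)]
    exact lintegral_congr fun ω =>
      ENNReal.ofReal_rpow_of_nonneg (rhoF_nonneg hEnv.lam_mem 1 ω) hp.le
  have h2 : (2 : ℝ≥0∞) ^ p ≠ ⊤ := ENNReal.rpow_ne_top_of_nonneg hp.le ENNReal.ofNat_ne_top
  refine ⟨((measurable_MPsiOne hEnv.meas_xi hEnv.xi_pos hEnv.meas_lam).pow_const p)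
    |>.aestronglyMeasurable, (hasFiniteIntegral_iff_ofReal
      (ae_of_all _ fun ω => Real.rpow_nonneg (MPsiOne_nonneg xi lam ω) p)).2 ?_⟩
  calc ∫⁻ ω, ENNReal.ofReal (MPsiOne xi lam ω ^ p) ∂Pr
      ≤ ∫⁻ ω, 2 ^ p * ∑' n : ℕ, ∏ j ∈ Finset.Icc 1 n, ENNReal.ofReal (rhoF lam j ω) ^ p ∂Pr :=
        lintegral_mono (ofReal_MPsiOne_rpow_le hEnv.lam_mem hp)
    _ < ⊤ := by
        rw [lintegral_const_mul' _ _ h2]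
        exact ENNReal.mul_lt_top h2.lt_top (lintegral_tsum_prod_Icc_lt_top hY hind hr
          (ENNReal.ofReal_lt_one.2 hmomρ1))

end Environment

section Setup

variable {Pr : Measure Ω} {xi : ℤ → Ω → ℕ} {lam : ℤ → Ω → ℝ}

lemma MinfSetup.identDistrib_Mψ [IsProbabilityMeasure Pr] (S : MinfSetup Pr xi lam)
    (hM : Measurable (MPsiOne xi lam)) : IdentDistrib S.Mψ (MPsiOne xi lam) S.P₂ Pr := by
  refine ⟨by_contra fun h => ?_, hM.aemeasurable, S.law⟩
  have := Measure.isProbabilityMeasure_map (μ := Pr) hM.aemeasurable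
  exact IsProbabilityMeasure.ne_zero _ (S.law.symm.trans (Measure.map_of_not_aemeasurable h))

lemma MinfSetup.indepFun_Mψ_besselOne (S : MinfSetup Pr xi lam) :
    IndepFun S.Mψ (besselOne S.W₁ S.W₂) S.P₂ := by
  have h₁ : Measurable[bmSig S.W₁ ⊔ bmSig S.W₂] (S.W₁ 1) := Measurable.of_comap_le
    (le_sup_of_le_left (le_iSup (fun t => MeasurableSpace.comap (S.W₁ t) inferInstance) 1))
  have h₂ : Measurable[bmSig S.W₁ ⊔ bmSig S.W₂] (S.W₂ 1) := Measurable.of_comap_le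
    (le_sup_of_le_right (le_iSup (fun t => MeasurableSpace.comap (S.W₂ t) inferInstance) 1))
  rw [IndepFun_iff_Indep]
  exact indep_of_indep_of_le_right S.indepM ((h₁.pow_const 2).add (h₂.pow_const 2)).comap_le

end Setup

theorem Minfty_moment_general
    (Pr : Measure Ω) [IsProbabilityMeasure Pr]
    (xi : ℤ → Ω → ℕ) (lam : ℤ → Ω → ℝ)
    (hEnv : IsSparseEnv Pr xi lam)
    -- assumptions (B)
    (β δ : ℝ) (hβ1 : 1 ≤ β) (hδ : 0 < δ) (hβδ : β + δ ≤ 2)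
    (hmomρ : Integrable (fun ω => rhoF lam 1 ω ^ (β + δ)) Pr)
    (hmomρ1 : ∫ ω, rhoF lam 1 ω ^ (β + δ) ∂Pr < 1)
 :
    ∀ S : MinfSetup Pr xi lam,
      Integrable (fun ω₂ => (Minfty S.W₁ S.W₂ S.Mψ ω₂) ^ (β + δ)) S.P₂ := by
  intro S
  have := S.prob
  have hp : 0 < β + δ := by linarith
  have hlaw := S.identDistrib_Mψ (measurable_MPsiOne hEnv.meas_xi hEnv.xi_pos hEnv.meas_lam)
  have habs : Measurable fun x : ℝ => |x| ^ (β + δ) := by fun_prop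
  have hMψ : Integrable (fun ω => |S.Mψ ω| ^ (β + δ)) S.P₂ :=
    (hlaw.comp habs).integrable_iff.2 <| (hEnv.integrable_MPsiOne_rpow hp hmomρ hmomρ1).congr
      (ae_of_all _ fun ω => by rw [Function.comp_apply, abs_of_nonneg (MPsiOne_nonneg xi lam ω)])
  have hprod := (S.indepFun_Mψ_besselOne.comp habs (measurable_id.pow_const (β + δ))).symm
    |>.integrable_mul (S.bm₁.integrable_besselOne_rpow S.bm₂ hp.le hβδ) hMψ
  have hmeas : AEMeasurable (Minfty S.W₁ S.W₂ S.Mψ) S.P₂ :=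
    (S.bm₁.aemeasurable_besselMax S.bm₂).max
      (((measurable_besselOne S.bm₁.meas S.bm₂.meas).aemeasurable.mul
        hlaw.aemeasurable_fst).div_const 2)
  exact ((S.bm₁.integrable_besselMax_rpow S.bm₂ hp.le hβδ).add hprod).mono'
    (hmeas.pow_const _).aestronglyMeasurable
    (ae_of_all _ (norm_Minfty_rpow_le S.W₁ S.W₂ S.Mψ hp.le))

/-- Under assumptions (B), `E[M_∞^{β+δ}] < ∞`. -/
theorem Minfty_moment
    (Pr : Measure Ω) [IsProbabilityMeasure Pr]
    (xi : ℤ → Ω → ℕ) (lam : ℤ → Ω → ℝ)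
    (hEnv : IsSparseEnv Pr xi lam)
    -- assumptions (B)
    (β δ : ℝ) (hβ1 : 1 ≤ β) (hβ2 : β < 2) (hδ : 0 < δ) (hβδ : β + δ ≤ 2)
    (ℓ : ℝ → ℝ)
    (hslow : ∀ c : ℝ, 0 < c → Tendsto (fun x : ℝ => ℓ (c * x) / ℓ x) atTop (nhds 1))
    (htail : Tendsto (fun x : ℝ =>
      (Pr {ω | x < (xi 1 ω : ℝ)}).toReal / (x ^ (-β) * ℓ x)) atTop (nhds 1))
    (hmomρ : Integrable (fun ω => rhoF lam 1 ω ^ (β + δ)) Pr)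
    (hmomρ1 : ∫ ω, rhoF lam 1 ω ^ (β + δ) ∂Pr < 1)
    (hindepξρ : IndepFun (fun ω => xi 1 ω) (fun ω => rhoF lam 1 ω) Pr)
    (hmomξ : Integrable (fun ω => (xi 1 ω : ℝ)) Pr)
 :
    ∀ S : MinfSetup Pr xi lam,
      Integrable (fun ω₂ => (Minfty S.W₁ S.W₂ S.Mψ ω₂) ^ (β + δ)) S.P₂ :=
  Minfty_moment_general Pr xi lam hEnv β δ hβ1 hδ hβδ hmomρ hmomρ1
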